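/- Let T be a phylogenetic tree with labeled vertex set L, let G be its distance graph, let R : L → ℕ be an injective ranking, and let M be the vertex-ranked MST of G with respect to R. Then the edge set of M is exactly { {Sg_R(i), Sg_R(j)} : {i,j} ∈ E_T and Sg_R(i) ≠ Sg_R(j) }; equivalently, M is the tree obtained from T by contracting, for every vertex u of T, the path from u to its surrogate vertex Sg_R(u). -/

import Mathlib

open SimpleGraph

/-- The threshold subgraph `G_{≤ t}`: same vertices, only edges of weight `≤ t`. -/
def thresholdGraph {V : Type*} (G : SimpleGraph V) (w : Sym2 V → ℝ) (t : ℝ) :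
    SimpleGraph V where
  Adj u v := G.Adj u v ∧ w s(u, v) ≤ t
  symm := by
    constructor
    intro u v hv
    exact ⟨hv.1.symm, by rw [Sym2.eq_swap]; exact hv.2⟩
  loopless := ⟨fun v hv => G.loopless.irrefl v hv.1⟩

/-- The strict threshold subgraph `G_{< t}`. -/
def strictThresholdGraph {V : Type*} (G : SimpleGraph V) (w : Sym2 V → ℝ) (t : ℝ) :
    SimpleGraph V where
  Adj u v := G.Adj u v ∧ w s(u, v) < t
  symm := by
    constructor
    intro u v hv
    exact ⟨hv.1.symm, by rw [Sym2.eq_swap]; exact hv.2⟩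
  loopless := ⟨fun v hv => G.loopless.irrefl v hv.1⟩

/-- The laminar family of an edge-weighted graph: the whole vertex set together with the
vertex sets of the connected components of every threshold subgraph. -/
def laminarFamily {V : Type*} (G : SimpleGraph V) (w : Sym2 V → ℝ) : Set (Set V) :=
  insert Set.univ
    {S | ∃ (t : ℝ) (C : (thresholdGraph G w t).ConnectedComponent), S = C.supp}

/-- `M` is a spanning tree of `G`. -/
def IsSpanningTree {V : Type*} (G M : SimpleGraph V) : Prop :=
  M ≤ G ∧ M.IsTree

/-- Total weight of (the edges of) a graph. -/
noncomputable def totalWeight {V : Type*} [Finite V] (M : SimpleGraph V)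
    (w : Sym2 V → ℝ) : ℝ :=
  ∑ e ∈ M.edgeSet.toFinite.toFinset, w e

/-- `M` is a minimum spanning tree of `G` with respect to the weights `w`. -/
def IsMST {V : Type*} [Finite V] (G : SimpleGraph V) (w : Sym2 V → ℝ)
    (M : SimpleGraph V) : Prop :=
  IsSpanningTree G M ∧ ∀ M' : SimpleGraph V, IsSpanningTree G M' →
    totalWeight M w ≤ totalWeight M' w

/-- A phylogenetic tree: a finite tree with strictly positive edge lengths and a nonempty
set `L` of labeled vertices, each hidden vertex having degree at least 3. -/
structure PhyloTree (V : Type*) where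
  finV : Finite V
  T : SimpleGraph V
  isTree : T.IsTree
  len : Sym2 V → ℝ
  len_pos : ∀ e ∈ T.edgeSet, 0 < len e
  L : Set V
  L_nonempty : L.Nonempty
  hidden_deg : ∀ v, v ∉ L → 3 ≤ (T.neighborSet v).ncard

namespace PhyloTree

variable {V : Type*}

/-- The unique path between two vertices of the tree. -/
noncomputable def path (P : PhyloTree V) (u v : V) : P.T.Walk u v :=
  (P.isTree.existsUnique_path u v).exists.choose

lemma path_isPath (P : PhyloTree V) (u v : V) : (P.path u v).IsPath :=
  (P.isTree.existsUnique_path u v).exists.choose_spec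

/-- The tree distance: the sum of the edge lengths along the unique path. -/
noncomputable def dist (P : PhyloTree V) (u v : V) : ℝ :=
  ((P.path u v).edges.map P.len).sum

lemma dist_comm (P : PhyloTree V) (u v : V) : P.dist u v = P.dist v u := by
  have h : (P.path u v).reverse = P.path v u :=
    (P.isTree.existsUnique_path v u).unique ((P.path_isPath u v).reverse)
      (P.path_isPath v u)
  unfold dist
  rw [← h, SimpleGraph.Walk.edges_reverse, List.map_reverse, List.sum_reverse]

/-- The tree distance as a symmetric function on unordered pairs. -/
noncomputable def wdist (P : PhyloTree V) : Sym2 V → ℝ :=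
  Sym2.lift ⟨fun u v => P.dist u v, fun u v => P.dist_comm u v⟩

/-- The surrogate set of a vertex: the labeled vertices closest to it. -/
def Sg (P : PhyloTree V) (h : V) : Set V :=
  {l | l ∈ P.L ∧ ∀ l' ∈ P.L, P.dist l h ≤ P.dist l' h}

/-- `s` is the surrogate vertex `Sg_R(h)` of `h` w.r.t. the ranking `R`:
the element of the surrogate set of `h` of smallest `R`-value. -/
def IsSgR (P : PhyloTree V) (R : V → ℕ) (h : V) (s : V) : Prop :=
  s ∈ P.Sg h ∧ ∀ l ∈ P.Sg h, R s ≤ R l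

/-- The edge weights of the distance graph of `P` (the complete graph on `↥P.L`). -/
noncomputable def wG (P : PhyloTree V) : Sym2 ↥P.L → ℝ :=
  fun e => P.wdist (e.map Subtype.val)

/-- An edge `e` of the distance graph lying in at least one MST (i.e. an edge of `g`). -/
def mstEdge (P : PhyloTree V) (e : Sym2 ↥P.L) : Prop :=
  haveI := P.finV
  ∃ M : SimpleGraph ↥P.L, IsMST (⊤ : SimpleGraph ↥P.L) P.wG M ∧ e ∈ M.edgeSet

/-- `δ_max(v)`: the maximum degree of `v` over all MSTs of the distance graph. -/
noncomputable def deltaMax (P : PhyloTree V) (v : ↥P.L) : ℕ :=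
  haveI := P.finV
  sSup {d : ℕ | ∃ M : SimpleGraph ↥P.L,
    IsMST (⊤ : SimpleGraph ↥P.L) P.wG M ∧ d = (M.neighborSet v).ncard}

end PhyloTree

/-- The smaller of the two ranks of the endpoints of an edge. -/
def sym2MinR {α : Type*} (R : α → ℕ) : Sym2 α → ℕ :=
  Sym2.lift ⟨fun a b => min (R a) (R b), fun a b => min_comm _ _⟩

/-- The larger of the two ranks of the endpoints of an edge. -/
def sym2MaxR {α : Type*} (R : α → ℕ) : Sym2 α → ℕ :=
  Sym2.lift ⟨fun a b => max (R a) (R b), fun a b => max_comm _ _⟩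

/-- The strict total order `<_R` on edges: first by weight, then by the smaller rank of
the endpoints, then by the larger rank of the endpoints. -/
def edgeLT {α : Type*} (w : Sym2 α → ℝ) (R : α → ℕ) (e f : Sym2 α) : Prop :=
  w e < w f ∨ (w e = w f ∧ (sym2MinR R e < sym2MinR R f ∨
    (sym2MinR R e = sym2MinR R f ∧ sym2MaxR R e < sym2MaxR R f)))

/-- `M` is the vertex-ranked MST of `G` w.r.t. the ranking `R`: a spanning tree such that
every non-tree edge `{u,v}` of `G` is the `<_R`-greatest edge of the cycle it closes,
i.e. every edge of the `M`-path from `u` to `v` is `<_R`-smaller than `{u,v}`. -/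
def IsVRMST {α : Type*} (G : SimpleGraph α) (w : Sym2 α → ℝ) (R : α → ℕ)
    (M : SimpleGraph α) : Prop :=
  IsSpanningTree G M ∧ ∀ u v : α, G.Adj u v → ¬M.Adj u v →
    ∀ p : M.Walk u v, p.IsPath → ∀ f ∈ p.edges, edgeLT w R f s(u, v)


/-! The surrogate map `h ↦ Sg_R(h)` fixes labeled vertices and sends every edge `{i, j}` of `T`
either to a single vertex or to a pair `{Sg_R(i), Sg_R(j)}`; since `T` is connected, these pairs
form a connected spanning subgraph of the distance graph.  Each such pair is an edge of the VRMST
`M`: removing `{i, j}` splits `T` into an `i`-side containing `Sg_R(i)` and a `j`-side containing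
`Sg_R(j)`, and an `M`-path between the two surrogates crosses this cut along an edge `{a, b}` with
`d(a, b) = d(a, i) + d(i, j) + d(j, b) ≥ d(Sg_R(i), Sg_R(j))`, with equality only if
`a ∈ Sg(i)` and `b ∈ Sg(j)`, which then rank no better than `Sg_R(i)` and `Sg_R(j)`.  So
`{Sg_R(i), Sg_R(j)}` is never the `<_R`-greatest edge of a cycle.  Finally, a connected spanning
subgraph of a tree is the whole tree. -/

namespace SimpleGraph

variable {α β : Type*} {G : SimpleGraph α} {H : SimpleGraph β}

theorem Reachable.map_of_adj_or_eq {f : α → β}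
    (hf : ∀ ⦃a b⦄, G.Adj a b → f a = f b ∨ H.Adj (f a) (f b)) {a b : α}
    (h : G.Reachable a b) : H.Reachable (f a) (f b) := by
  rw [reachable_iff_reflTransGen] at h ⊢
  refine Relation.ReflTransGen.lift' f (fun x y hxy => ?_) _ _ h
  rcases hf hxy with heq | hadj
  · rw [Function.onFun, heq]
  · exact Relation.ReflTransGen.single hadj

theorem Connected.of_surjective_of_adj_or_eq (hG : G.Connected) {f : α → β}
    (hsurj : Function.Surjective f)
    (hf : ∀ ⦃a b⦄, G.Adj a b → f a = f b ∨ H.Adj (f a) (f b)) : H.Connected := by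
  refine (connected_iff H).mpr ⟨fun u v => ?_, hG.nonempty.map f⟩
  obtain ⟨a, rfl⟩ := hsurj u
  obtain ⟨b, rfl⟩ := hsurj v
  exact (hG.preconnected a b).map_of_adj_or_eq hf

theorem IsTree.edgeSet_eq_of_subset {M : SimpleGraph α} (hM : M.IsTree) {S : Set (Sym2 α)}
    (hS : S ⊆ M.edgeSet) (hconn : (fromEdgeSet S).Connected) : M.edgeSet = S := by
  have hle : fromEdgeSet S ≤ M := fun _ _ h => hS h.1
  rw [← (isTree_iff_minimal_connected.mp hM).eq_of_le hconn hle, edgeSet_fromEdgeSet]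
  exact Set.sdiff_subset.antisymm fun e he => ⟨he, M.not_isDiag_of_mem_edgeSet (hS he)⟩

end SimpleGraph

theorem not_edgeLT_of_le {α : Type*} {w : Sym2 α → ℝ} {R : α → ℕ} {a b c d : α}
    (hw : w s(c, d) ≤ w s(a, b)) (hR : w s(c, d) = w s(a, b) → R c ≤ R a ∧ R d ≤ R b) :
    ¬ edgeLT w R s(a, b) s(c, d) := by
  rintro (hlt | ⟨heq, hmin | ⟨-, hmax⟩⟩)
  · linarith
  · obtain ⟨hca, hdb⟩ := hR heq.symm
    simp only [sym2MinR, Sym2.lift_mk] at hmin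
    omega
  · obtain ⟨hca, hdb⟩ := hR heq.symm
    simp only [sym2MaxR, Sym2.lift_mk] at hmax
    omega

namespace PhyloTree

variable {V : Type*} (P : PhyloTree V)

lemma eq_path_of_isPath {u v : V} {p : P.T.Walk u v} (hp : p.IsPath) : p = P.path u v :=
  (P.isTree.existsUnique_path u v).unique hp (P.path_isPath u v)

lemma dist_self (u : V) : P.dist u u = 0 := by
  rw [dist, ← P.eq_path_of_isPath Walk.IsPath.nil]
  rfl

lemma dist_pos {u v : V} (h : u ≠ v) : 0 < P.dist u v := by
  refine List.sum_pos _ (fun x hx => ?_) ?_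
  · obtain ⟨e, he, rfl⟩ := List.mem_map.mp hx
    exact P.len_pos e ((P.path u v).edges_subset_edgeSet he)
  · rw [Ne, List.map_eq_nil_iff, Walk.edges_eq_nil]
    exact Walk.not_nil_of_ne h

lemma dist_nonneg (u v : V) : 0 ≤ P.dist u v := by
  rcases eq_or_ne u v with rfl | h
  · exact (P.dist_self u).ge
  · exact (P.dist_pos h).le

lemma dist_eq_add_of_mem_support {u v w : V} (h : v ∈ (P.path u w).support) :
    P.dist u w = P.dist u v + P.dist v w := by
  classical
  have htake : (P.path u w).takeUntil v h = P.path u v :=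
    P.eq_path_of_isPath ((P.path_isPath u w).takeUntil h)
  have hdrop : (P.path u w).dropUntil v h = P.path v w :=
    P.eq_path_of_isPath ((P.path_isPath u w).dropUntil h)
  conv_lhs => rw [dist, ← (P.path u w).take_spec h]
  rw [Walk.edges_append, List.map_append, List.sum_append, htake, hdrop, dist, dist]

section Side

def OnSide (i j x : V) : Prop := (P.T.deleteEdges {s(i, j)}).Reachable x i

variable {P} {i j : V}

lemma onSide_left : P.OnSide i j i := Reachable.refl i

lemma not_onSide_right (hij : P.T.Adj i j) : ¬ P.OnSide i j j := fun h =>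
  isBridge_iff.mp (isAcyclic_iff_forall_adj_isBridge.mp P.isTree.isAcyclic hij) h.symm

lemma not_onSide_of_onSide_swap (hij : P.T.Adj i j) {x : V} (hx : P.OnSide j i x) :
    ¬ P.OnSide i j x := by
  intro h
  rw [OnSide, Sym2.eq_swap] at hx
  exact P.not_onSide_right hij (hx.symm.trans h)

lemma mem_edges_path_of_onSide {x y : V} (hx : P.OnSide i j x) (hy : ¬ P.OnSide i j y) :
    s(i, j) ∈ (P.path x y).edges := by
  by_contra h
  have w := (P.path x y).toDeleteEdges {s(i, j)} (by rintro e he rfl; exact h he)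
  exact hy (w.reachable.symm.trans hx)

lemma dist_eq_of_onSide (hij : P.T.Adj i j) {x : V} (hx : P.OnSide i j x) :
    P.dist x j = P.dist x i + P.dist i j :=
  P.dist_eq_add_of_mem_support
    (Walk.fst_mem_support_of_mem_edges _ (mem_edges_path_of_onSide hx (P.not_onSide_right hij)))

lemma dist_eq_of_not_onSide {y : V} (hy : ¬ P.OnSide i j y) :
    P.dist i y = P.dist i j + P.dist j y :=
  P.dist_eq_add_of_mem_support
    (Walk.snd_mem_support_of_mem_edges _ (mem_edges_path_of_onSide onSide_left hy))

lemma dist_eq_of_onSide_of_not_onSide {x y : V} (hx : P.OnSide i j x) (hy : ¬ P.OnSide i j y) :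
    P.dist x y = P.dist x i + P.dist i j + P.dist j y := by
  rw [P.dist_eq_add_of_mem_support
    (Walk.fst_mem_support_of_mem_edges _ (mem_edges_path_of_onSide hx hy)),
    dist_eq_of_not_onSide hy, add_assoc]

lemma dist_le_dist_add_of_adj (hij : P.T.Adj i j) (x : V) :
    P.dist x i ≤ P.dist x j + P.dist i j := by
  by_cases hx : P.OnSide i j x
  · linarith [dist_eq_of_onSide hij hx, P.dist_nonneg i j]
  · linarith [dist_eq_of_not_onSide hx, P.dist_comm x i, P.dist_comm x j]

end Side

section Surrogate

lemma Sg_eq_singleton {l : V} (hl : l ∈ P.L) : P.Sg l = {l} := by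
  ext l'
  refine ⟨fun hl' => ?_, ?_⟩
  · by_contra hne
    have := hl'.2 l hl
    linarith [P.dist_self l, P.dist_pos hne]
  · rintro rfl
    exact ⟨hl, fun l'' _ => P.dist_self l' ▸ P.dist_nonneg l'' l'⟩

lemma exists_isSgR (R : V → ℕ) (h : V) : ∃ s, P.IsSgR R h s := by
  have := P.finV
  obtain ⟨l, hl, hmin⟩ :=
    Set.exists_min_image P.L (fun l => P.dist l h) P.L.toFinite P.L_nonempty
  obtain ⟨s, hs, hsmin⟩ :=
    Set.exists_min_image (P.Sg h) R (Set.toFinite _) ⟨l, hl, hmin⟩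
  exact ⟨s, hs, hsmin⟩

noncomputable def sgR (R : V → ℕ) (h : V) : P.L :=
  ⟨(P.exists_isSgR R h).choose, (P.exists_isSgR R h).choose_spec.1.1⟩

lemma isSgR_sgR (R : V → ℕ) (h : V) : P.IsSgR R h (P.sgR R h) :=
  (P.exists_isSgR R h).choose_spec

lemma sgR_coe (R : V → ℕ) (l : P.L) : P.sgR R l = l := by
  have h := (P.isSgR_sgR R l).1
  rw [P.Sg_eq_singleton l.2] at h
  exact Subtype.ext h

variable {P} {i j : V}

/-- A vertex on the `j`-side is exactly `d(i, j)` closer to `j` than to `i`, and no vertex is more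
than `d(i, j)` closer. -/
lemma mem_Sg_and_Sg_subset_of_not_onSide (hij : P.T.Adj i j) {s : V} (hs : s ∈ P.Sg i)
    (hside : ¬ P.OnSide i j s) : s ∈ P.Sg j ∧ P.Sg j ⊆ P.Sg i := by
  have hsi : P.dist s i = P.dist s j + P.dist i j := by
    linarith [dist_eq_of_not_onSide hside, P.dist_comm s i, P.dist_comm s j]
  have hsj : s ∈ P.Sg j := ⟨hs.1, fun l hl => by
    linarith [hs.2 l hl, P.dist_le_dist_add_of_adj hij l]⟩
  refine ⟨hsj, fun t ht => ⟨ht.1, fun l hl => ?_⟩⟩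
  linarith [P.dist_le_dist_add_of_adj hij t, ht.2 s hs.1, hs.2 l hl]

lemma onSide_of_isSgR {R : V → ℕ} (hR : Set.InjOn R P.L) (hij : P.T.Adj i j) {si sj : V}
    (hsi : P.IsSgR R i si) (hsj : P.IsSgR R j sj) (hne : si ≠ sj) : P.OnSide i j si := by
  by_contra hside
  obtain ⟨hsi_j, hsub⟩ := mem_Sg_and_Sg_subset_of_not_onSide hij hsi.1 hside
  exact hne (hR hsi.1.1 hsj.1.1 (le_antisymm (hsi.2 sj (hsub hsj.1)) (hsj.2 si hsi_j)))

lemma dist_le_of_onSide_of_not_onSide {si sj a b : V} (hsi : si ∈ P.Sg i) (hsj : sj ∈ P.Sg j)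
    (hsi_side : P.OnSide i j si) (hsj_side : ¬ P.OnSide i j sj) (ha : a ∈ P.L) (hb : b ∈ P.L)
    (ha_side : P.OnSide i j a) (hb_side : ¬ P.OnSide i j b) :
    P.dist si sj ≤ P.dist a b ∧
      (P.dist si sj = P.dist a b → a ∈ P.Sg i ∧ b ∈ P.Sg j) := by
  rw [dist_eq_of_onSide_of_not_onSide hsi_side hsj_side,
    dist_eq_of_onSide_of_not_onSide ha_side hb_side, P.dist_comm j sj, P.dist_comm j b]
  have hai := hsi.2 a ha
  have hbj := hsj.2 b hb
  refine ⟨by linarith, fun heq => ⟨⟨ha, fun l hl => ?_⟩, ⟨hb, fun l hl => ?_⟩⟩⟩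
  · linarith [hsi.2 l hl]
  · linarith [hsj.2 l hl]

lemma adj_of_isSgR {R : V → ℕ} (hR : Set.InjOn R P.L) {M : SimpleGraph P.L}
    (hM : IsVRMST (⊤ : SimpleGraph P.L) P.wG (fun x => R x.val) M) (hij : P.T.Adj i j)
    {si sj : V} (hsi : P.IsSgR R i si) (hsj : P.IsSgR R j sj) (hne : si ≠ sj) :
    M.Adj ⟨si, hsi.1.1⟩ ⟨sj, hsj.1.1⟩ := by
  classical
  by_contra hadj
  have hsi_side := onSide_of_isSgR hR hij hsi hsj hne
  have hsj_side := not_onSide_of_onSide_swap hij (onSide_of_isSgR hR hij.symm hsj hsi hne.symm)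
  obtain ⟨p⟩ := hM.1.2.connected.preconnected ⟨si, hsi.1.1⟩ ⟨sj, hsj.1.1⟩
  obtain ⟨d, hd, ha_side, hb_side⟩ :=
    p.toPath.val.exists_boundary_dart {x | P.OnSide i j x} hsi_side hsj_side
  have hlt := hM.2 _ _ (by simpa using hne) hadj _ p.toPath.prop d.edge (List.mem_map_of_mem hd)
  obtain ⟨hle, heq⟩ := dist_le_of_onSide_of_not_onSide hsi.1 hsj.1 hsi_side hsj_side
    d.fst.prop d.snd.prop ha_side hb_side
  exact not_edgeLT_of_le hle (fun h => ⟨hsi.2 _ (heq h).1, hsj.2 _ (heq h).2⟩) hlt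

end Surrogate

end PhyloTree

/-- the edge set of the vertex-ranked MST of the distance graph consists
exactly of the pairs of distinct surrogates of the endpoints of the edges of `T`. -/
theorem vrmst_edgeSet_eq_surrogate_pairs {V : Type*} (P : PhyloTree V) (R : V → ℕ)
    (hR : Set.InjOn R P.L) (M : SimpleGraph ↥P.L)
    (hM : IsVRMST (⊤ : SimpleGraph ↥P.L) P.wG (fun x => R x.val) M) :
    M.edgeSet = {e : Sym2 ↥P.L | ∃ i j si sj : V, P.T.Adj i j ∧
      P.IsSgR R i si ∧ P.IsSgR R j sj ∧ si ≠ sj ∧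
      e.map Subtype.val = s(si, sj)} := by
  refine hM.1.2.edgeSet_eq_of_subset ?_ ?_
  · rintro e ⟨i, j, si, sj, hij, hsi, hsj, hne, he⟩
    have he' : e = s(⟨si, hsi.1.1⟩, ⟨sj, hsj.1.1⟩) :=
      Sym2.map.injective Subtype.val_injective (by rw [he, Sym2.map_mk])
    exact he' ▸ P.adj_of_isSgR hR hM hij hsi hsj hne
  · refine P.isTree.connected.of_surjective_of_adj_or_eq (f := P.sgR R)
      (fun l => ⟨l.val, P.sgR_coe R l⟩) (fun x y hxy => ?_)
    by_cases hxy' : P.sgR R x = P.sgR R y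
    · exact Or.inl hxy'
    · exact Or.inr ⟨⟨x, y, _, _, hxy, P.isSgR_sgR R x, P.isSgR_sgR R y,
        fun h => hxy' (Subtype.ext h), Sym2.map_mk _ _ _⟩, hxy'⟩
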